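/- arXiv:2503.24094 — 2 statements merged into one kernel-verified Lean document; each statement's English description precedes it below -/
import Mathlib

section
/- Let A be an associative F-algebra and let φ : M_n(F) → A be a map satisfying φ(X ∘ Y) = φ(X) ∘ φ(Y) for all X, Y ∈ M_n(F). If φ(X) = 0 for some nonzero matrix X ∈ M_n(F), then φ is identically zero on M_n(F). -/
/-!
The zero set `S` of `φ` absorbs Jordan products: `W ∈ S` implies `W ∘ Y ∈ S` for every `Y`.
As `W ∘ Y = W * Y` when `W` and `Y` commute, `1 ∈ S` forces `S` to be everything, so it suffices
to reach `1` from `X` by Jordan products. Compressing a Jordan product of `X` by a matrix unit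
puts some `E_jj` in `S`. A diagonal idempotent `P ∈ S` with `P_aa = 1`, `P_mm = 0` is then
enlarged by `P ↦ P ∘ (P + 2(E_am + E_ma)) = P + E_am + E_ma`, followed by multiplication with
a matrix commuting with the latter and turning it into `P + E_mm`.
-/

open Matrix

def IsJordanAbsorbing (F : Type*) {B : Type*} [Field F] [Ring B] [Algebra F B] (S : Set B) : Prop :=
  ∀ W ∈ S, ∀ Y, (2 : F)⁻¹ • (W * Y + Y * W) ∈ S

theorem isJordanAbsorbing_setOf_eq_zero {F B A : Type*} [Field F] [Ring B] [Algebra F B]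
    [Ring A] [Algebra F A] {φ : B → A}
    (hφ : ∀ X Y, φ ((2 : F)⁻¹ • (X * Y + Y * X)) = (2 : F)⁻¹ • (φ X * φ Y + φ Y * φ X)) :
    IsJordanAbsorbing F {W | φ W = 0} := by
  intro W (hW : φ W = 0) Y
  show φ _ = 0
  rw [hφ, hW, zero_mul, mul_zero, add_zero, smul_zero]

theorem Matrix.diagonal_mul_single {ι R : Type*} [Fintype ι] [DecidableEq ι] [Semiring R]
    (d : ι → R) (a b : ι) (c : R) : diagonal d * single a b c = single a b (d a * c) := by
  ext i k
  by_cases h : a = i ∧ b = k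
  · obtain ⟨rfl, rfl⟩ := h
    simp
  · simp [diagonal_mul, h]

theorem Matrix.single_mul_diagonal {ι R : Type*} [Fintype ι] [DecidableEq ι] [Semiring R]
    (d : ι → R) (a b : ι) (c : R) : single a b c * diagonal d = single a b (c * d b) := by
  ext i k
  by_cases h : a = i ∧ b = k
  · obtain ⟨rfl, rfl⟩ := h
    simp
  · simp [mul_diagonal, h]

namespace IsJordanAbsorbing

section Ring

variable {F B : Type*} [Field F] [Ring B] [Algebra F B] {S : Set B}

theorem mul_mem_of_commute (hS : IsJordanAbsorbing F S) (h2 : (2 : F) ≠ 0) {W Y : B}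
    (hW : W ∈ S) (hWY : Commute W Y) : W * Y ∈ S := by
  have h := hS W hW Y
  rwa [← hWY.eq, ← two_smul F, inv_smul_smul₀ h2] at h

theorem smul_mem (hS : IsJordanAbsorbing F S) (h2 : (2 : F) ≠ 0) {W : B} (hW : W ∈ S)
    (r : F) : r • W ∈ S := by
  simpa using hS.mul_mem_of_commute h2 hW ((Commute.one_right W).smul_right r)

theorem mem_of_one_mem (hS : IsJordanAbsorbing F S) (h2 : (2 : F) ≠ 0) (h1 : (1 : B) ∈ S)
    (Y : B) : Y ∈ S := by
  simpa using hS.mul_mem_of_commute h2 h1 (Commute.one_left Y)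

-- `W ∘ (2e - 1) = eW + We - W` commutes with `e`, and its product with `e` is `eWe`.
theorem mul_mul_mem (hS : IsJordanAbsorbing F S) (h2 : (2 : F) ≠ 0) {e W : B}
    (he : IsIdempotentElem e) (hW : W ∈ S) : e * W * e ∈ S := by
  have hM : e * W + W * e - W ∈ S := by
    have h := hS W hW ((2 : F) • e - 1)
    have hsum : (2 : F) • (W * e) - W + ((2 : F) • (e * W) - W) =
        (2 : F) • (e * W + W * e - W) := by
      module
    rwa [mul_sub, sub_mul, mul_smul_comm, smul_mul_assoc, mul_one, one_mul, hsum,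
      inv_smul_smul₀ h2] at h
  have hMe : (e * W + W * e - W) * e = e * W * e := by
    rw [sub_mul, add_mul, mul_assoc W, he.eq]; abel
  have heM : e * (e * W + W * e - W) = e * W * e := by
    rw [mul_sub, mul_add, ← mul_assoc, he.eq, ← mul_assoc]; abel
  simpa [hMe] using hS.mul_mem_of_commute h2 hM (heM.trans hMe.symm).symm

-- With `u = E_am`, `v = E_ma` and `p` diagonal, this adds `E_mm` to `p`.
theorem add_mul_mem (hS : IsJordanAbsorbing F S) (h2 : (2 : F) ≠ 0) {p u v : B}
    (hp : p ∈ S) (hpp : IsIdempotentElem p) (hpu : p * u = u) (hup : u * p = 0)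
    (hpv : p * v = 0) (hvp : v * p = v) (huu : u * u = 0) (hvv : v * v = 0)
    (huvu : u * v * u = u) (hvuv : v * u * v = v) : p + v * u ∈ S := by
  have hT : p + u + v ∈ S := by
    have h := hS p hp (p + (2 : F) • (u + v))
    have hsum : p + (2 : F) • (u + 0) + (p + (2 : F) • (0 + v)) = (2 : F) • (p + u + v) := by
      module
    rwa [mul_add, add_mul, mul_smul_comm, smul_mul_assoc, mul_add, add_mul, hpp.eq, hpu, hpv,
      hup, hvp, hsum, inv_smul_smul₀ h2] at h
  have huvp : u * v * p = u * v := by rw [mul_assoc, hvp]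
  have hvup : v * u * p = 0 := by rw [mul_assoc, hup, mul_zero]
  have huvv : u * v * v = 0 := by rw [mul_assoc, hvv, mul_zero]
  have hvuu : v * u * u = 0 := by rw [mul_assoc, huu, mul_zero]
  set C := p - u * v + u + v - v * u
  have hTB : (p + u + v) * C = p + v * u := by
    simp only [C, add_mul, mul_add, mul_sub, ← mul_assoc, hpp.eq, hpu, hup, hpv, hvp, huu,
      hvv, huvu, hvuv, zero_mul]
    abel
  have hBT : C * (p + u + v) = p + v * u := by
    simp only [C, add_mul, sub_mul, mul_add, hpp.eq, hpu, hup, hpv, hvp, huu, hvv, huvu, hvuv,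
      huvp, hvup, huvv, hvuu]
    abel
  simpa [hTB] using hS.mul_mem_of_commute h2 hT (hTB.trans hBT.symm)

end Ring

section Matrix

variable {F ι : Type*} [Field F] [Fintype ι] [DecidableEq ι] {S : Set (Matrix ι ι F)}

theorem diagonal_add_single_mem (hS : IsJordanAbsorbing F S) (h2 : (2 : F) ≠ 0) {d : ι → F}
    (hd : IsIdempotentElem d) (hdS : diagonal d ∈ S) {a m : ι} (ha : d a = 1) (hm : d m = 0) :
    diagonal d + single m m 1 ∈ S := by
  have ham : a ≠ m := by rintro rfl; simp [ha] at hm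
  simpa using hS.add_mul_mem h2 (u := single a m 1) (v := single m a 1) hdS
    (by rw [IsIdempotentElem, diagonal_mul_diagonal, ← Pi.mul_def, hd.eq])
    (by simp [diagonal_mul_single, ha])
    (by simp [single_mul_diagonal, hm]) (by simp [diagonal_mul_single, hm])
    (by simp [single_mul_diagonal, ha]) (by simp [ham.symm]) (by simp [ham]) (by simp) (by simp)

theorem one_mem_of_single_mem (hS : IsJordanAbsorbing F S) (h2 : (2 : F) ≠ 0) {j : ι}
    (hj : single j j 1 ∈ S) : (1 : Matrix ι ι F) ∈ S := by
  set ind : Finset ι → ι → F := fun s k => if k ∈ s then 1 else 0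
  have ind_insert {m : ι} {s : Finset ι} (hm : m ∉ s) :
      diagonal (ind (insert m s)) = diagonal (ind s) + single m m 1 := by
    rw [← diagonal_single, diagonal_add]
    congr 1
    funext k
    by_cases hk : k = m <;> simp [ind, hk, hm]
  have key (s : Finset ι) : diagonal (ind (insert j s)) ∈ S := by
    induction s using Finset.induction_on with
    | empty =>
      rw [ind_insert (Finset.notMem_empty j)]
      simpa [ind] using hj
    | insert m s hm ih =>
      by_cases hmj : m = j
      · rwa [hmj, Finset.insert_idem]
      · have hm' : m ∉ insert j s := by simp [hmj, hm]
        rw [Finset.insert_comm, ind_insert hm']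
        exact hS.diagonal_add_single_mem h2 (a := j) (by ext k; simp [ind]) ih (by simp [ind])
          (by simp [ind, hm'])
  simpa [ind] using key Finset.univ

theorem single_mem_of_apply_self_ne_zero (hS : IsJordanAbsorbing F S) (h2 : (2 : F) ≠ 0)
    {Z : Matrix ι ι F} (hZ : Z ∈ S) {j : ι} (hj : Z j j ≠ 0) : single j j 1 ∈ S := by
  have he : IsIdempotentElem (single j j (1 : F)) := by simp [IsIdempotentElem]
  have h := hS.smul_mem h2 (hS.mul_mul_mem h2 he hZ) (Z j j)⁻¹
  rwa [single_mul_mul_single, one_mul, mul_one, smul_single, smul_eq_mul,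
    inv_mul_cancel₀ hj] at h

theorem one_mem_of_ne_zero (hS : IsJordanAbsorbing F S) (h2 : (2 : F) ≠ 0)
    {X : Matrix ι ι F} (hX : X ∈ S) (hX0 : X ≠ 0) : (1 : Matrix ι ι F) ∈ S := by
  obtain ⟨i, j, hij⟩ : ∃ i j, X i j ≠ 0 := by
    by_contra! h
    exact hX0 (Matrix.ext h)
  refine hS.one_mem_of_single_mem h2 (j := j) ?_
  by_cases hij' : i = j
  · subst hij'
    exact hS.single_mem_of_apply_self_ne_zero h2 hX hij
  · refine hS.single_mem_of_apply_self_ne_zero h2 (hS X hX (single j i 1)) ?_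
    simp [hij, h2, Ne.symm hij']

end Matrix

end IsJordanAbsorbing

theorem stmt_7 {F : Type*} [Field F] (h2 : (2 : F) ≠ 0) (n : ℕ)
    {A : Type*} [Ring A] [Algebra F A]
    (φ : Matrix (Fin n) (Fin n) F → A)
    (hφ : ∀ X Y : Matrix (Fin n) (Fin n) F,
      φ ((2 : F)⁻¹ • (X * Y + Y * X)) = (2 : F)⁻¹ • (φ X * φ Y + φ Y * φ X))
    (X : Matrix (Fin n) (Fin n) F) (hX : X ≠ 0) (hφX : φ X = 0) :
    ∀ Y : Matrix (Fin n) (Fin n) F, φ Y = 0 := by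
  have hS := isJordanAbsorbing_setOf_eq_zero hφ
  exact hS.mem_of_one_mem h2 (hS.one_mem_of_ne_zero h2 hφX hX)
end

section
/- Let φ : M_n(F) → M_m(F) be a nonzero map satisfying φ(X ∘ Y) = φ(X) ∘ φ(Y) for all X, Y ∈ M_n(F) and φ(0) = 0. Then for every nonzero idempotent P ∈ M_n(F), rank(φ(P)) ≥ rank(P); in particular, m ≥ n. -/
/-!
Since `x ∘ x = x²`, a Jordan-multiplicative `φ` maps idempotents to idempotents, and when `2` is
invertible the relations `p ∘ q = 0`, resp. `p ∘ q = q`, for an idempotent `p` force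
`pq = qp = 0`, resp. `pq = qp = q`. Writing a rank-`r` idempotent as `P = AB` with `BA = 1`, the
`eᵢ = A Eᵢᵢ B` are `r` orthogonal nonzero idempotents below `P`. So the `φ(eᵢ)` are orthogonal
idempotents below `φ(P)`, and they give `r` independent vectors in the range of `φ(P)` as soon as
they are nonzero.

They are: the zero set of `φ` is closed under `X ↦ X ∘ Y`. If it contained a nonzero idempotent
`J ≠ 1`, then with matrix units `eᵢⱼ` pairing a vector of `range J` with one of `ker J`, the
idempotent `J + e₁₁` of strictly larger range is `M ∘ M` for some `M = J ∘ Y`, so it lies in the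
zero set as well. An idempotent of maximal range in the zero set is therefore `1`, and then
`φ(X) = φ(1 ∘ X) = 0` for all `X`.
-/

def jordanMul (F : Type*) {A : Type*} [Field F] [Add A] [Mul A] [SMul F A] (x y : A) : A :=
  (2 : F)⁻¹ • (x * y + y * x)

def IsJordanMultiplicative (F : Type*) {A B : Type*} [Field F] [Add A] [Mul A] [SMul F A] [Add B]
    [Mul B] [SMul F B] (φ : A → B) : Prop :=
  ∀ x y, φ (jordanMul F x y) = jordanMul F (φ x) (φ y)

section Jordan

variable {F M R : Type*} [Field F] (h2 : (2 : F) ≠ 0)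
include h2

theorem inv_two_smul_add_self [AddCommGroup M] [Module F M] (x : M) :
    (2 : F)⁻¹ • (x + x) = x := by
  rw [← two_smul F x, smul_smul, inv_mul_cancel₀ h2, one_smul]

theorem add_self_injective [AddCommGroup M] [Module F M] : Function.Injective fun x : M ↦ x + x :=
  fun x y h ↦ by
    rw [← inv_two_smul_add_self h2 x, ← inv_two_smul_add_self h2 y]
    exact congrArg _ h

variable [Ring R] [Module F R] {p q x y z : R}

theorem jordanMul_eq_iff : jordanMul F x y = z ↔ x * y + y * x = z + z := by
  refine ⟨fun h ↦ ?_, fun h ↦ ?_⟩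
  · rw [← h, jordanMul, ← two_smul F, smul_smul, mul_inv_cancel₀ h2, one_smul]
  · rw [jordanMul, h, inv_two_smul_add_self h2]

theorem jordanMul_self (x : R) : jordanMul F x x = x * x :=
  (jordanMul_eq_iff h2).2 rfl

theorem IsIdempotentElem.mul_eq_zero_of_jordanMul_eq_zero (hp : IsIdempotentElem p)
    (h : jordanMul F p q = 0) : p * q = 0 ∧ q * p = 0 := by
  rw [jordanMul_eq_iff h2, add_zero] at h
  have hl : p * q + p * q * p = 0 := by
    simpa [mul_add, ← mul_assoc, hp.eq] using congrArg (p * ·) h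
  have hr : p * q * p + q * p = 0 := by
    simpa [add_mul, mul_assoc, hp.eq] using congrArg (· * p) h
  have hcomm : p * q = q * p := by
    rw [eq_neg_of_add_eq_zero_left hl, eq_neg_of_add_eq_zero_right hr]
  have hpq : p * q = 0 := add_self_injective h2 (by simpa [← hcomm] using h)
  exact ⟨hpq, hcomm ▸ hpq⟩

theorem IsIdempotentElem.mul_eq_of_jordanMul_eq (hp : IsIdempotentElem p)
    (h : jordanMul F p q = q) : p * q = q ∧ q * p = q := by
  rw [jordanMul_eq_iff h2] at h
  have hl : p * q * p = p * q := by
    simpa [mul_add, ← mul_assoc, hp.eq] using congrArg (p * ·) h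
  have hr : p * q * p = q * p := by
    simpa [add_mul, mul_assoc, hp.eq] using congrArg (· * p) h
  have hcomm : q * p = p * q := hr.symm.trans hl
  rw [hcomm] at h
  have hpq : p * q = q := add_self_injective h2 h
  exact ⟨hpq, hcomm.trans hpq⟩

theorem exists_jordanMul_jordanMul_eq_add {J : R} (hJ : IsIdempotentElem J)
    (e : Fin 2 → Fin 2 → R) (he : ∀ i j k l, e i j * e k l = if j = k then e i l else 0)
    (hJe : ∀ i j, J * e i j = if i = 0 then e i j else 0)
    (heJ : ∀ i j, e i j * J = if j = 0 then e i j else 0) :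
    ∃ Y, jordanMul F (jordanMul F J Y) (jordanMul F J Y) = J + e 1 1 := by
  -- `M` is `J` with its corner `e 0 0` replaced by `e 0 1 + e 1 0`, whose square is
  -- `e 0 0 + e 1 1`
  set M := J - e 0 0 + e 0 1 + e 1 0
  refine ⟨M + (e 0 1 + e 1 0), ?_⟩
  have hM : jordanMul F J (M + (e 0 1 + e 1 0)) = M := by
    rw [jordanMul_eq_iff h2]
    simp only [M, mul_add, add_mul, mul_sub, sub_mul, hJ.eq, hJe, heJ, ↓reduceIte, Fin.isValue,
      one_ne_zero, add_zero, zero_add]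
    abel
  rw [hM, jordanMul_self h2]
  simp only [M, mul_add, add_mul, mul_sub, sub_mul, hJ.eq, hJe, heJ, he, ↓reduceIte, Fin.isValue,
    one_ne_zero, zero_ne_one, add_zero, zero_add, sub_self, add_sub_cancel_right]
  abel

end Jordan

namespace IsJordanMultiplicative

variable {F A B : Type*} [Field F] [Ring A] [Module F A] [Ring B] [Module F B] {φ : A → B}
  (hφ : IsJordanMultiplicative F φ) (h2 : (2 : F) ≠ 0)
include hφ h2

theorem isIdempotentElem_map {x : A} (hx : IsIdempotentElem x) : IsIdempotentElem (φ x) := by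
  have := hφ x x
  rwa [jordanMul_self h2, jordanMul_self h2, hx.eq, eq_comm] at this

theorem map_mul_map_eq_zero (h0 : φ 0 = 0) {x y : A} (hx : IsIdempotentElem x) (hxy : x * y = 0)
    (hyx : y * x = 0) : φ x * φ y = 0 := by
  have hjordan : jordanMul F x y = 0 := by rw [jordanMul, hxy, hyx, add_zero, smul_zero]
  refine ((hφ.isIdempotentElem_map h2 hx).mul_eq_zero_of_jordanMul_eq_zero h2 ?_).1
  rw [← hφ, hjordan, h0]

theorem map_mul_map_eq {x y : A} (hx : IsIdempotentElem x) (hxy : x * y = y) (hyx : y * x = y) :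
    φ x * φ y = φ y := by
  have hjordan : jordanMul F x y = y := (jordanMul_eq_iff h2).2 (by rw [hxy, hyx])
  refine ((hφ.isIdempotentElem_map h2 hx).mul_eq_of_jordanMul_eq h2 ?_).1
  rw [← hφ, hjordan]

theorem orthogonalIdempotents_comp (h0 : φ 0 = 0) {I : Type*} {e : I → A}
    (he : OrthogonalIdempotents e) : OrthogonalIdempotents (φ ∘ e) :=
  ⟨fun i ↦ hφ.isIdempotentElem_map h2 (he.idem i), fun _ _ hij ↦
    hφ.map_mul_map_eq_zero h2 h0 (he.idem _) (he.ortho hij) (he.ortho hij.symm)⟩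

end IsJordanMultiplicative

namespace Matrix

variable {ι F : Type*} [Fintype ι] [Field F]

theorem range_mulVecLin_lt {J J' : Matrix ι ι F} (hJ : IsIdempotentElem J) (h₁ : J' * J = J)
    (h₂ : J * J' ≠ J') : LinearMap.range J.mulVecLin < LinearMap.range J'.mulVecLin := by
  refine lt_of_le_not_ge ?_ fun hle ↦ h₂ (ext_iff_mulVec.2 fun x ↦ ?_)
  · rw [← h₁, mulVecLin_mul]
    exact LinearMap.range_comp_le_range _ _
  · obtain ⟨z, hz⟩ := hle ⟨x, rfl⟩
    rw [mulVecLin_apply, mulVecLin_apply] at hz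
    rw [← mulVec_mulVec, ← hz, mulVec_mulVec, hJ.eq]

variable [DecidableEq ι]

theorem exists_dotProduct_eq_one {v : ι → F} (hv : v ≠ 0) : ∃ u, u ⬝ᵥ v = 1 := by
  obtain ⟨i, hi⟩ := Function.ne_iff.1 hv
  exact ⟨Pi.single i (v i)⁻¹, by rw [single_dotProduct, inv_mul_cancel₀ hi]⟩

theorem exists_matrixUnits {J : Matrix ι ι F} (hJ : IsIdempotentElem J) (hJ0 : J ≠ 0)
    (hJ1 : J ≠ 1) :
    ∃ e : Fin 2 → Fin 2 → Matrix ι ι F,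
      (∀ i j k l, e i j * e k l = if j = k then e i l else 0) ∧
      (∀ i j, J * e i j = if i = 0 then e i j else 0) ∧
      (∀ i j, e i j * J = if j = 0 then e i j else 0) ∧ e 1 1 ≠ 0 := by
  obtain ⟨x, hx⟩ : ∃ x, J *ᵥ x ≠ 0 := by simpa [ext_iff_mulVec] using hJ0
  obtain ⟨y, hy⟩ : ∃ y, J *ᵥ y ≠ y := by simpa [ext_iff_mulVec] using hJ1
  set v := J *ᵥ x
  set w := y - J *ᵥ y
  have hJv : J *ᵥ v = v := by rw [mulVec_mulVec, hJ.eq]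
  have hJw : J *ᵥ w = 0 := by rw [mulVec_sub, mulVec_mulVec, hJ.eq, sub_self]
  have hw : w ≠ 0 := sub_ne_zero.2 hy.symm
  obtain ⟨δ₀, hδ₀⟩ := exists_dotProduct_eq_one hx
  obtain ⟨γ₀, hγ₀⟩ := exists_dotProduct_eq_one hw
  set δ := δ₀ ᵥ* J
  set γ := γ₀ ᵥ* (1 - J)
  have hδJ : δ ᵥ* J = δ := by rw [vecMul_vecMul, hJ.eq]
  have hγJ : γ ᵥ* J = 0 := by rw [vecMul_vecMul, sub_mul, one_mul, hJ.eq, sub_self, vecMul_zero]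
  have hδv : δ ⬝ᵥ v = 1 := by rw [← dotProduct_mulVec, hJv, hδ₀]
  have hδw : δ ⬝ᵥ w = 0 := by rw [← dotProduct_mulVec, hJw, dotProduct_zero]
  have hγv : γ ⬝ᵥ v = 0 := by
    rw [← dotProduct_mulVec, sub_mulVec, one_mulVec, hJv, sub_self, dotProduct_zero]
  have hγw : γ ⬝ᵥ w = 1 := by rw [← dotProduct_mulVec, sub_mulVec, one_mulVec, hJw, sub_zero, hγ₀]
  refine ⟨fun i j ↦ vecMulVec (![v, w] i) (![δ, γ] j), fun i j k l ↦ ?_, fun i j ↦ ?_,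
    fun i j ↦ ?_, fun h ↦ ?_⟩
  · rw [vecMulVec_mul_vecMulVec]
    fin_cases j <;> fin_cases k <;> simp [hδv, hδw, hγv, hγw]
  · rw [mul_vecMulVec]
    fin_cases i <;> simp [hJv, hJw]
  · rw [vecMulVec_mul]
    fin_cases j <;> simp [hδJ, hγJ]
  · simpa [vecMulVec_mulVec, hγw, hw] using congrArg (· *ᵥ w) h

theorem exists_mul_eq_and_mul_eq_one {P : Matrix ι ι F} (hP : IsIdempotentElem P) :
    ∃ (A : Matrix ι (Fin P.rank) F) (B : Matrix (Fin P.rank) ι F), A * B = P ∧ B * A = 1 := by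
  have hp : IsIdempotentElem P.mulVecLin := hP.map (toLinAlgEquiv' (R := F) (n := ι))
  set U := LinearMap.range P.mulVecLin
  have hπ := (LinearMap.isProj_range_iff_isIdempotentElem _).2 hp
  let b : Module.Basis (Fin P.rank) F U := Module.finBasisOfFinrankEq F U rfl
  refine ⟨LinearMap.toMatrix' (U.subtype ∘ₗ b.equivFun.symm.toLinearMap),
    LinearMap.toMatrix' (b.equivFun.toLinearMap ∘ₗ hπ.codRestrict), ?_, ?_⟩
  · rw [← LinearMap.toMatrix'_comp]
    convert LinearMap.toMatrix'_toLin' P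
    exact LinearMap.ext fun x ↦ by simp
  · rw [← LinearMap.toMatrix'_comp, ← LinearMap.toMatrix'_id]
    congr 1
    exact LinearMap.ext fun x ↦ by simp only [LinearMap.comp_apply, LinearEquiv.coe_coe,
      Submodule.subtype_apply, hπ.codRestrict_apply_cod, LinearEquiv.apply_symm_apply,
      LinearMap.id_apply]

theorem exists_orthogonalIdempotents_of_isIdempotentElem {P : Matrix ι ι F}
    (hP : IsIdempotentElem P) :
    ∃ e : Fin P.rank → Matrix ι ι F,
      OrthogonalIdempotents e ∧ ∀ i, e i ≠ 0 ∧ P * e i = e i ∧ e i * P = e i := by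
  obtain ⟨A, B, hAB, hBA⟩ := exists_mul_eq_and_mul_eq_one hP
  have hBA' : ∀ X : Matrix (Fin P.rank) ι F, B * (A * X) = X := fun X ↦ by
    rw [← Matrix.mul_assoc, hBA, Matrix.one_mul]
  set e : Fin P.rank → Matrix ι ι F := fun i ↦ A * single i i (1 : F) * B
  have he : ∀ i j, e i * e j = A * (single i i (1 : F) * single j j 1) * B := fun i j ↦ by
    simp only [e, Matrix.mul_assoc, hBA']
  refine ⟨e, ⟨fun i ↦ ?_, fun i j hij ↦ ?_⟩, fun i ↦ ⟨fun h ↦ ?_, ?_, ?_⟩⟩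
  · rw [IsIdempotentElem, he, single_mul_single_same, one_mul]
  · show e i * e j = 0
    rw [he, single_mul_single_of_ne (h := hij), Matrix.mul_zero, Matrix.zero_mul]
  · have := congrArg (fun X ↦ (B * X * A) i i) h
    simp [e, Matrix.mul_assoc, hBA', hBA] at this
  · simp [e, ← hAB, Matrix.mul_assoc, hBA']
  · simp [e, ← hAB, Matrix.mul_assoc, hBA']

theorem card_le_rank_of_orthogonalIdempotents {I : Type*} [Fintype I] {p : Matrix ι ι F}
    {Q : I → Matrix ι ι F} (hQ : OrthogonalIdempotents Q) (hQ0 : ∀ i, Q i ≠ 0)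
    (hpQ : ∀ i, p * Q i = Q i) : Fintype.card I ≤ p.rank := by
  classical
  choose x hx using fun i ↦ (by simpa [ext_iff_mulVec] using hQ0 i : ∃ x, Q i *ᵥ x ≠ 0)
  set u := fun i ↦ Q i *ᵥ x i
  have hu : LinearIndependent F u := by
    have hcomp : (LinearMap.pi fun i ↦ (Q i).mulVecLin) ∘ u = fun j ↦ Pi.single j (u j) := by
      funext j i
      by_cases hij : i = j
      · subst hij
        simp [u, mulVec_mulVec, (hQ.idem i).eq]
      · simp [u, mulVec_mulVec, hQ.ortho hij, hij]
    exact .of_comp _ (hcomp ▸ Pi.linearIndependent_single_of_ne_zero hx)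
  have hspan : Submodule.span F (Set.range u) ≤ LinearMap.range p.mulVecLin :=
    Submodule.span_le.2 <| Set.range_subset_iff.2 fun i ↦ ⟨u i, by simp [u, mulVec_mulVec, hpQ]⟩
  rw [← finrank_span_eq_card hu]
  exact Submodule.finrank_mono hspan

end Matrix

theorem IsJordanMultiplicative.eq_zero_of_map_idempotent_eq_zero {ι F B : Type*} [Fintype ι]
    [DecidableEq ι] [Field F] [NonUnitalNonAssocSemiring B] [Module F B]
    {φ : Matrix ι ι F → B} (hφ : IsJordanMultiplicative F φ) (h2 : (2 : F) ≠ 0)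
    {J₀ : Matrix ι ι F} (hJ₀ : IsIdempotentElem J₀) (hJ₀0 : J₀ ≠ 0) (hφJ₀ : φ J₀ = 0) :
    φ = 0 := by
  have hzero : ∀ X Y, φ X = 0 → φ (jordanMul F X Y) = 0 := fun X Y hX ↦ by
    rw [hφ, hX, jordanMul, zero_mul, mul_zero, add_zero, smul_zero]
  obtain ⟨J, ⟨hJ, hJ0, hφJ⟩, hmax⟩ :=
    (InvImage.wf (fun J : Matrix ι ι F ↦ LinearMap.range J.mulVecLin) wellFounded_gt).has_min
      {J | IsIdempotentElem J ∧ J ≠ 0 ∧ φ J = 0} ⟨J₀, hJ₀, hJ₀0, hφJ₀⟩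
  have hJ1 : J = 1 := by
    by_contra hJ1
    obtain ⟨e, he, hJe, heJ, he11⟩ := Matrix.exists_matrixUnits hJ hJ0 hJ1
    obtain ⟨Y, hY⟩ := exists_jordanMul_jordanMul_eq_add h2 hJ e he hJe heJ
    have h₁ : (J + e 1 1) * J = J := by simp [add_mul, hJ.eq, heJ]
    have h₂ : J * (J + e 1 1) ≠ J + e 1 1 := by simpa [mul_add, hJ.eq, hJe] using he11
    refine hmax (J + e 1 1) ⟨?_, fun h ↦ hJ0 ?_, ?_⟩ (Matrix.range_mulVecLin_lt hJ h₁ h₂)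
    · simp [IsIdempotentElem, mul_add, add_mul, hJ.eq, hJe, heJ, he]
    · rw [← h₁, h, zero_mul]
    · rw [← hY]
      exact hzero _ _ (hzero _ _ hφJ)
  funext X
  have hX : jordanMul F J X = X := (jordanMul_eq_iff h2).2 (by rw [hJ1, one_mul, mul_one])
  rw [Pi.zero_apply, ← hX]
  exact hzero _ _ hφJ

theorem stmt_11 {F : Type*} [Field F] (h2 : (2 : F) ≠ 0) (n m : ℕ)
    (φ : Matrix (Fin n) (Fin n) F → Matrix (Fin m) (Fin m) F)
    (hφ : ∀ X Y : Matrix (Fin n) (Fin n) F,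
      φ ((2 : F)⁻¹ • (X * Y + Y * X)) = (2 : F)⁻¹ • (φ X * φ Y + φ Y * φ X))
    (hnz : φ ≠ 0) (h0 : φ 0 = 0) :
    (∀ P : Matrix (Fin n) (Fin n) F, P * P = P → P ≠ 0 → P.rank ≤ (φ P).rank) ∧ n ≤ m := by
  have hJordan : IsJordanMultiplicative F φ := hφ
  have hrank (P : Matrix (Fin n) (Fin n) F) (hP : IsIdempotentElem P) : P.rank ≤ (φ P).rank := by
    obtain ⟨e, he, hPe⟩ := Matrix.exists_orthogonalIdempotents_of_isIdempotentElem hP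
    simpa using Matrix.card_le_rank_of_orthogonalIdempotents
      (hJordan.orthogonalIdempotents_comp h2 h0 he)
      (fun i h ↦ hnz (hJordan.eq_zero_of_map_idempotent_eq_zero h2 (he.idem i) (hPe i).1 h))
      (fun i ↦ hJordan.map_mul_map_eq h2 hP (hPe i).2.1 (hPe i).2.2)
  refine ⟨fun P hP _ ↦ hrank P hP, ?_⟩
  rcases n with _ | n
  · exact Nat.zero_le m
  · calc n + 1 = (1 : Matrix (Fin (n + 1)) (Fin (n + 1)) F).rank := by simp [Matrix.rank_one]
      _ ≤ (φ 1).rank := hrank 1 .one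
      _ ≤ m := by simpa using (φ 1).rank_le_card_width
end
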